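/- arXiv:1302.5930 — 4 statements merged into one kernel-verified Lean document; each statement's English description precedes it below -/
import Mathlib

section
/- Let d ∈ ℕ with d ≥ 1, α ∈ [0, d/2), β ∈ ℝ and c ∈ (0,∞). Then sup_{v ∈ ℤ^d} [ (λ_v)^β · Σ_{k ∈ ℤ^d, ‖k‖ ≤ c‖v‖} 1/(λ_k)^α ] < ∞ if and only if β ≤ α − d/2. -/
open scoped ENNReal

/-- `λ_x = 1 + x₁² + ⋯ + x_d²` for a lattice point `x ∈ ℤ^d`. -/
noncomputable def lam {d : ℕ} (x : Fin d → ℤ) : ℝ := 1 + ∑ i, ((x i : ℝ)) ^ 2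

/-- The Euclidean norm of a lattice point `x ∈ ℤ^d`. -/
noncomputable def znorm {d : ℕ} (x : Fin d → ℤ) : ℝ := Real.sqrt (∑ i, ((x i : ℝ)) ^ 2)

/-!
Let `G(R) = lamSum d α R` be the sum of `λ_k^{-α}` over the lattice points with `λ_k ≤ R`.
The inner sum of the theorem is `G(1 + c²‖v‖²)`, and `1 + c²‖v‖²` lies between
`min 1 c² · λ_v` and `max 1 c² · λ_v`. For `R ≥ 1` one has `G(R) ≍ R^{d/2-α}`: from above by
doubling, `G(2R) ≤ G(R) + #{λ_k ≤ 2R} R^{-α} ≤ G(R) + 4^d R^{d/2-α}`, which sums geometrically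
since `α < d/2`; from below because `{λ_k ≤ R}` contains a cube of side about `√(R/d)` on which
`λ_k^{-α} ≥ R^{-α}`. So the supremum is finite iff `λ_v^{β+d/2-α}` is bounded, i.e. iff
`β + d/2 - α ≤ 0`.
-/

open Finset

section
variable {d : ℕ}

lemma one_le_lam (x : Fin d → ℤ) : 1 ≤ lam x := le_add_of_nonneg_right (by positivity)

lemma lam_pos (x : Fin d → ℤ) : 0 < lam x := one_pos.trans_le (one_le_lam x)

lemma lam_eq_one_add_znorm_sq (x : Fin d → ℤ) : lam x = 1 + znorm x ^ 2 := by
  rw [znorm, Real.sq_sqrt (by positivity), lam]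

lemma znorm_nonneg (x : Fin d → ℤ) : 0 ≤ znorm x := Real.sqrt_nonneg _

lemma znorm_le_iff_lam_le {T : ℝ} (hT : 0 ≤ T) (x : Fin d → ℤ) :
    znorm x ≤ T ↔ lam x ≤ 1 + T ^ 2 := by
  rw [lam_eq_one_add_znorm_sq, add_le_add_iff_left, sq_le_sq₀ (znorm_nonneg x) hT]

lemma sq_le_lam (x : Fin d → ℤ) (i : Fin d) : (x i : ℝ) ^ 2 ≤ lam x :=
  (single_le_sum (fun j _ => sq_nonneg (x j : ℝ)) (mem_univ i)).trans
    (le_add_of_nonneg_left zero_le_one)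

lemma one_div_lam_rpow_nonneg (α : ℝ) (x : Fin d → ℤ) : 0 ≤ 1 / lam x ^ α :=
  one_div_nonneg.2 (Real.rpow_nonneg (lam_pos x).le α)

lemma lam_const (n : ℤ) : lam (fun _ : Fin d => n) = 1 + d * (n : ℝ) ^ 2 := by
  simp [lam]

end

noncomputable def intCube (d N : ℕ) : Finset (Fin d → ℤ) :=
  Fintype.piFinset fun _ => Icc (-(N : ℤ)) N

noncomputable def lamSublevel (d : ℕ) (R : ℝ) : Finset (Fin d → ℤ) :=
  {k ∈ intCube d ⌊√R⌋₊ | lam k ≤ R}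

noncomputable def lamSum (d : ℕ) (α R : ℝ) : ℝ :=
  ∑ k ∈ lamSublevel d R, 1 / lam k ^ α

section
variable {d N : ℕ} {R : ℝ}

lemma card_intCube (d N : ℕ) : #(intCube d N) = (2 * N + 1) ^ d := by
  simp only [intCube, Fintype.card_piFinset, Int.card_Icc, prod_const, card_univ,
    Fintype.card_fin]
  congr 1
  omega

lemma mem_intCube {x : Fin d → ℤ} : x ∈ intCube d N ↔ ∀ i, |x i| ≤ N := by
  simp [intCube, abs_le]

lemma lam_le_of_mem_intCube {x : Fin d → ℤ} (hx : x ∈ intCube d N) :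
    lam x ≤ 1 + d * (N : ℝ) ^ 2 := by
  have hsq (i : Fin d) : (x i : ℝ) ^ 2 ≤ (N : ℝ) ^ 2 :=
    sq_le_sq' (by exact_mod_cast (abs_le.1 (mem_intCube.1 hx i)).1)
      (by exact_mod_cast (abs_le.1 (mem_intCube.1 hx i)).2)
  simpa [lam] using sum_le_sum fun i (_ : i ∈ univ) => hsq i

lemma mem_lamSublevel {x : Fin d → ℤ} : x ∈ lamSublevel d R ↔ lam x ≤ R := by
  refine ⟨fun h => (mem_filter.1 h).2, fun h => mem_filter.2 ⟨mem_intCube.2 fun i => ?_, h⟩⟩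
  have : ((x i).natAbs : ℝ) ≤ √R := by
    rw [Nat.cast_natAbs, Int.cast_abs]
    exact Real.abs_le_sqrt ((sq_le_lam x i).trans h)
  rw [Int.abs_eq_natAbs]
  exact_mod_cast Nat.le_floor this

lemma card_lamSublevel_le : (#(lamSublevel d R) : ℝ) ≤ (2 * √R + 1) ^ d := by
  have : #(lamSublevel d R) ≤ #(intCube d ⌊√R⌋₊) := card_le_card (filter_subset _ _)
  rw [card_intCube] at this
  calc (#(lamSublevel d R) : ℝ) ≤ ((2 * ⌊√R⌋₊ + 1) ^ d : ℕ) := by exact_mod_cast this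
    _ ≤ (2 * √R + 1) ^ d := by
      push_cast
      gcongr
      exact Nat.floor_le (Real.sqrt_nonneg R)

lemma intCube_subset_lamSublevel (h : 1 + d * (N : ℝ) ^ 2 ≤ R) :
    intCube d N ⊆ lamSublevel d R :=
  fun _ hx => mem_lamSublevel.2 ((lam_le_of_mem_intCube hx).trans h)

end

lemma sqrt_pow_div_rpow {R : ℝ} (hR : 0 < R) (d : ℕ) (α : ℝ) :
    √R ^ d / R ^ α = R ^ ((d : ℝ) / 2 - α) := by
  rw [Real.rpow_sub hR, Real.sqrt_eq_rpow, ← Real.rpow_natCast, ← Real.rpow_mul hR.le]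
  ring_nf

section
variable {d : ℕ} {α R : ℝ}

lemma lamSum_mono : Monotone (lamSum d α) := fun _ _ hRR' =>
  sum_le_sum_of_subset_of_nonneg
    (fun _ hk => mem_lamSublevel.2 ((mem_lamSublevel.1 hk).trans hRR'))
    (fun k _ _ => one_div_lam_rpow_nonneg α k)

lemma lamSum_le_card (hα : 0 ≤ α) (R : ℝ) : lamSum d α R ≤ #(lamSublevel d R) := by
  rw [card_eq_sum_ones, Nat.cast_sum]
  refine sum_le_sum fun k _ => ?_
  rw [Nat.cast_one, div_le_one (by have := lam_pos k; positivity)]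
  exact Real.one_le_rpow (one_le_lam k) hα

lemma lamSum_two_mul_le (hα : 0 ≤ α) (hR : 1 ≤ R) :
    lamSum d α (2 * R) ≤ lamSum d α R + 4 ^ d * R ^ ((d : ℝ) / 2 - α) := by
  have hR0 : 0 < R := one_pos.trans_le hR
  have hlow : {k ∈ lamSublevel d (2 * R) | lam k ≤ R} = lamSublevel d R := by
    ext k
    simp only [mem_filter, mem_lamSublevel]
    exact ⟨And.right, fun h => ⟨by linarith, h⟩⟩
  have hhigh : ∑ k ∈ lamSublevel d (2 * R) with ¬lam k ≤ R, 1 / lam k ^ α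
      ≤ #(lamSublevel d (2 * R)) * (1 / R ^ α) := by
    refine (sum_le_card_nsmul _ _ (1 / R ^ α) fun k hk => ?_).trans ?_
    · have : R ≤ lam k := le_of_not_ge (mem_filter.1 hk).2
      gcongr
    · rw [nsmul_eq_mul]
      gcongr
      exact filter_subset _ _
  have hcount : (2 * √(2 * R) + 1 : ℝ) ≤ 4 * √R := by
    have h1 : 1 ≤ √R := Real.one_le_sqrt.2 hR
    have h2 : √(2 * R) ≤ 3 / 2 * √R := by
      rw [Real.sqrt_le_left (by positivity), mul_pow, Real.sq_sqrt hR0.le]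
      nlinarith
    linarith
  calc lamSum d α (2 * R)
      = lamSum d α R + ∑ k ∈ lamSublevel d (2 * R) with ¬lam k ≤ R, 1 / lam k ^ α := by
        rw [lamSum, ← sum_filter_add_sum_filter_not _ (fun k => lam k ≤ R), hlow, lamSum]
    _ ≤ lamSum d α R + (4 * √R) ^ d * (1 / R ^ α) := by
        gcongr
        exact hhigh.trans (by gcongr; exact card_lamSublevel_le.trans (by gcongr))
    _ = lamSum d α R + 4 ^ d * R ^ ((d : ℝ) / 2 - α) := by
        rw [← sqrt_pow_div_rpow hR0, mul_pow]
        ring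

end

section
variable {d : ℕ} {α : ℝ}

lemma exists_lamSum_two_pow_le (hα0 : 0 ≤ α) (hα : α < (d : ℝ) / 2) :
    ∃ K, 0 ≤ K ∧ ∀ j : ℕ,
      lamSum d α (2 ^ j) ≤ K * ((2 : ℝ) ^ j) ^ ((d : ℝ) / 2 - α) := by
  set e := (d : ℝ) / 2 - α
  have hq : 0 < (2 : ℝ) ^ e - 1 := sub_pos.2 (Real.one_lt_rpow one_lt_two (by simp [e, hα]))
  -- `K (2^e - 1) ≥ 4^d` is what makes the doubling step close
  set K := (3 : ℝ) ^ d + 4 ^ d / (2 ^ e - 1)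
  have hK : K + 4 ^ d ≤ K * 2 ^ e := by
    have : 4 ^ d / (2 ^ e - 1) * (2 ^ e - 1) = (4 : ℝ) ^ d := div_mul_cancel₀ _ hq.ne'
    nlinarith [pow_pos (three_pos : (0 : ℝ) < 3) d]
  refine ⟨K, by positivity, fun j => ?_⟩
  induction j with
  | zero =>
    have h1 : lamSum d α 1 ≤ 3 ^ d :=
      (lamSum_le_card hα0 1).trans (card_lamSublevel_le.trans (by norm_num))
    simp only [pow_zero, Real.one_rpow, mul_one]
    exact h1.trans (le_add_of_nonneg_right (by positivity))
  | succ j ih =>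
    calc lamSum d α (2 ^ (j + 1))
        ≤ lamSum d α (2 ^ j) + 4 ^ d * ((2 : ℝ) ^ j) ^ e := by
          rw [pow_succ']
          exact lamSum_two_mul_le hα0 (one_le_pow₀ one_le_two)
      _ ≤ (K + 4 ^ d) * ((2 : ℝ) ^ j) ^ e := by linarith
      _ ≤ K * 2 ^ e * ((2 : ℝ) ^ j) ^ e := by gcongr
      _ = K * ((2 : ℝ) ^ (j + 1)) ^ e := by
          rw [pow_succ', Real.mul_rpow zero_le_two (by positivity), mul_assoc]

lemma exists_lamSum_le_rpow (hα0 : 0 ≤ α) (hα : α < (d : ℝ) / 2) :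
    ∃ C, 0 ≤ C ∧ ∀ R, 1 ≤ R → lamSum d α R ≤ C * R ^ ((d : ℝ) / 2 - α) := by
  set e := (d : ℝ) / 2 - α
  obtain ⟨K, hK, hdyadic⟩ := exists_lamSum_two_pow_le hα0 hα
  refine ⟨K * 2 ^ e, by positivity, fun R hR => ?_⟩
  obtain ⟨j, hjR, hRj⟩ := exists_nat_pow_near hR one_lt_two
  calc lamSum d α R ≤ lamSum d α (2 ^ (j + 1)) := lamSum_mono hRj.le
    _ ≤ K * ((2 : ℝ) ^ (j + 1)) ^ e := hdyadic (j + 1)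
    _ ≤ K * (2 * R) ^ e := by
        have he : 0 ≤ e := by simp only [e]; linarith
        gcongr
        rw [pow_succ']
        linarith
    _ = K * 2 ^ e * R ^ e := by rw [Real.mul_rpow zero_le_two (by linarith), mul_assoc]

lemma exists_rpow_le_lamSum (hd : 1 ≤ d) (hα0 : 0 ≤ α) :
    ∃ κ, 0 < κ ∧ ∀ R, 1 ≤ R → κ * R ^ ((d : ℝ) / 2 - α) ≤ lamSum d α R := by
  have hd0 : (0 : ℝ) < d := by exact_mod_cast hd
  refine ⟨1 / √(2 * d) ^ d, by positivity, fun R hR => ?_⟩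
  have hR0 : 0 < R := one_pos.trans_le hR
  set s := √((R - 1) / d)
  set m := ⌊s⌋₊
  have hm : (m : ℝ) ≤ s := Nat.floor_le (Real.sqrt_nonneg _)
  have hsub : intCube d m ⊆ lamSublevel d R := by
    refine intCube_subset_lamSublevel ?_
    have : (m : ℝ) ^ 2 ≤ (R - 1) / d :=
      (pow_le_pow_left₀ (Nat.cast_nonneg m) hm 2).trans (Real.sq_sqrt (by bound)).le
    rw [le_div_iff₀ hd0] at this
    linarith
  -- `2m + 1` is at least `1` and at least `s`, hence at least `√(R / 2d)`
  have hside : √R / √(2 * d) ≤ 2 * m + 1 := by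
    have h1 : s ≤ m + 1 := (Nat.lt_floor_add_one s).le
    have h2 : R / (2 * d) ≤ (2 * m + 1) ^ 2 := by
      have hs2 : (R - 1) / d ≤ ((m : ℝ) + 1) ^ 2 := by
        rw [← Real.sq_sqrt (by bound : 0 ≤ (R - 1) / d)]
        exact pow_le_pow_left₀ (Real.sqrt_nonneg _) h1 2
      have hm0 : (0 : ℝ) ≤ m := Nat.cast_nonneg m
      have hd1 : (1 : ℝ) ≤ d := by exact_mod_cast hd
      rw [div_le_iff₀ hd0] at hs2
      rw [div_le_iff₀ (by positivity)]
      nlinarith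
    rw [← Real.sqrt_div' _ (by positivity), Real.sqrt_le_left (by positivity)]
    exact h2
  calc 1 / √(2 * d) ^ d * R ^ ((d : ℝ) / 2 - α)
      = (√R / √(2 * d)) ^ d * (1 / R ^ α) := by
        rw [← sqrt_pow_div_rpow hR0, div_pow]
        ring
    _ ≤ #(intCube d m) * (1 / R ^ α) := by
        rw [card_intCube]
        push_cast
        gcongr
    _ ≤ ∑ k ∈ intCube d m, 1 / lam k ^ α := by
        rw [← nsmul_eq_mul]
        refine card_nsmul_le_sum _ _ _ fun k hk => ?_
        have := lam_pos k
        gcongr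
        exact mem_lamSublevel.1 (hsub hk)
    _ ≤ lamSum d α R :=
        sum_le_sum_of_subset_of_nonneg hsub
          (fun k _ _ => one_div_lam_rpow_nonneg α k)

end

lemma iSup_ofReal_lt_top_iff {ι : Sort*} {f : ι → ℝ} :
    (⨆ i, ENNReal.ofReal (f i)) < ⊤ ↔ BddAbove (Set.range f) := by
  refine ⟨fun h => ⟨_, Set.forall_mem_range.2 fun i =>
    (ENNReal.ofReal_le_iff_le_toReal h.ne).1 (le_iSup (fun i => ENNReal.ofReal (f i)) i)⟩,
    fun ⟨M, hM⟩ => ?_⟩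
  exact (iSup_le fun i => ENNReal.ofReal_le_ofReal (hM ⟨i, rfl⟩)).trans_lt ENNReal.ofReal_lt_top

lemma bddAbove_range_iff_of_le_of_le {ι : Sort*} {f g : ι → ℝ} {κ C : ℝ} (hκ : 0 < κ)
    (hC : 0 ≤ C) (hlow : ∀ i, κ * g i ≤ f i) (hup : ∀ i, f i ≤ C * g i) :
    BddAbove (Set.range f) ↔ BddAbove (Set.range g) := by
  constructor
  · rintro ⟨M, hM⟩
    refine ⟨M / κ, Set.forall_mem_range.2 fun i => ?_⟩
    rw [le_div_iff₀' hκ]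
    exact (hlow i).trans (hM ⟨i, rfl⟩)
  · rintro ⟨M, hM⟩
    exact ⟨C * M, Set.forall_mem_range.2 fun i =>
      (hup i).trans (mul_le_mul_of_nonneg_left (hM ⟨i, rfl⟩) hC)⟩

section
variable {d : ℕ}

lemma tsum_ite_znorm_le (α : ℝ) {T : ℝ} (hT : 0 ≤ T) :
    ∑' k : Fin d → ℤ, (if znorm k ≤ T then ENNReal.ofReal (1 / lam k ^ α) else 0) =
      ENNReal.ofReal (lamSum d α (1 + T ^ 2)) := by
  simp_rw [znorm_le_iff_lam_le hT, ← mem_lamSublevel (d := d) (R := 1 + T ^ 2)]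
  rw [lamSum, ENNReal.ofReal_sum_of_nonneg
    (fun k _ => one_div_lam_rpow_nonneg α k)]
  exact (tsum_eq_sum fun k hk => if_neg hk).trans (sum_congr rfl fun k hk => if_pos hk)

lemma min_mul_lam_le (c : ℝ) (v : Fin d → ℤ) :
    min 1 (c ^ 2) * lam v ≤ 1 + (c * znorm v) ^ 2 := by
  rw [lam_eq_one_add_znorm_sq, mul_pow]
  nlinarith [min_le_left 1 (c ^ 2), min_le_right 1 (c ^ 2), sq_nonneg (znorm v)]

lemma le_max_mul_lam (c : ℝ) (v : Fin d → ℤ) :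
    1 + (c * znorm v) ^ 2 ≤ max 1 (c ^ 2) * lam v := by
  rw [lam_eq_one_add_znorm_sq, mul_pow]
  nlinarith [le_max_left 1 (c ^ 2), le_max_right 1 (c ^ 2), sq_nonneg (znorm v)]

lemma exists_lamSum_ball_le (c : ℝ) {α : ℝ} (hα0 : 0 ≤ α) (hα : α < (d : ℝ) / 2) :
    ∃ C, 0 ≤ C ∧ ∀ v : Fin d → ℤ,
      lamSum d α (1 + (c * znorm v) ^ 2) ≤ C * lam v ^ ((d : ℝ) / 2 - α) := by
  obtain ⟨C, hC0, hC⟩ := exists_lamSum_le_rpow hα0 hα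
  refine ⟨C * max 1 (c ^ 2) ^ ((d : ℝ) / 2 - α), by positivity, fun v => ?_⟩
  calc lamSum d α (1 + (c * znorm v) ^ 2)
      ≤ C * (1 + (c * znorm v) ^ 2) ^ ((d : ℝ) / 2 - α) :=
        hC _ (le_add_of_nonneg_right (sq_nonneg _))
    _ ≤ C * (max 1 (c ^ 2) * lam v) ^ ((d : ℝ) / 2 - α) := by
        have : 0 ≤ (d : ℝ) / 2 - α := by linarith
        gcongr
        exact le_max_mul_lam c v
    _ = C * max 1 (c ^ 2) ^ ((d : ℝ) / 2 - α) * lam v ^ ((d : ℝ) / 2 - α) := by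
        rw [Real.mul_rpow (by positivity) (lam_pos v).le, mul_assoc]

lemma exists_lamSum_ball_ge (hd : 1 ≤ d) {c α : ℝ} (hc : c ≠ 0) (hα0 : 0 ≤ α)
    (hα : α < (d : ℝ) / 2) :
    ∃ κ, 0 < κ ∧ ∀ v : Fin d → ℤ,
      κ * lam v ^ ((d : ℝ) / 2 - α) ≤ lamSum d α (1 + (c * znorm v) ^ 2) := by
  obtain ⟨κ, hκ0, hκ⟩ := exists_rpow_le_lamSum hd hα0
  have hmin : 0 < min 1 (c ^ 2) := lt_min one_pos (by positivity)
  refine ⟨κ * min 1 (c ^ 2) ^ ((d : ℝ) / 2 - α), by positivity, fun v => ?_⟩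
  calc κ * min 1 (c ^ 2) ^ ((d : ℝ) / 2 - α) * lam v ^ ((d : ℝ) / 2 - α)
      = κ * (min 1 (c ^ 2) * lam v) ^ ((d : ℝ) / 2 - α) := by
        rw [Real.mul_rpow hmin.le (lam_pos v).le, mul_assoc]
    _ ≤ κ * (1 + (c * znorm v) ^ 2) ^ ((d : ℝ) / 2 - α) := by
        have : 0 ≤ (d : ℝ) / 2 - α := by linarith
        have := lam_pos v
        gcongr
        exact min_mul_lam_le c v
    _ ≤ lamSum d α (1 + (c * znorm v) ^ 2) := hκ _ (le_add_of_nonneg_right (sq_nonneg _))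

lemma bddAbove_range_lam_rpow_iff (hd : 1 ≤ d) {γ : ℝ} :
    BddAbove (Set.range fun v : Fin d → ℤ => lam v ^ γ) ↔ γ ≤ 0 := by
  refine ⟨fun h => ?_, fun hγ => ⟨1, Set.forall_mem_range.2 fun v =>
    Real.rpow_le_one_of_one_le_of_nonpos (one_le_lam v) hγ⟩⟩
  by_contra! hγ
  obtain ⟨M, hM⟩ := h
  -- on the diagonal `v = (n, …, n)` one has `λ_v = 1 + d n² ≥ n`
  have hdiag : Filter.Tendsto (fun n : ℕ => lam (fun _ : Fin d => (n : ℤ))) .atTop .atTop := by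
    refine Filter.tendsto_atTop_mono (fun n => ?_) tendsto_natCast_atTop_atTop
    have hd1 : (1 : ℝ) ≤ d := by exact_mod_cast hd
    rw [lam_const]
    push_cast
    nlinarith [sq_nonneg ((n : ℝ) - 1), (Nat.cast_nonneg n : (0 : ℝ) ≤ n)]
  obtain ⟨n, hn⟩ := (((tendsto_rpow_atTop hγ).comp hdiag).eventually_gt_atTop M).exists
  exact hn.not_ge (hM ⟨_, rfl⟩)

end

/-- Growth rate of finite sums:
`sup_{v ∈ ℤ^d} [ (λ_v)^β · Σ_{k ∈ ℤ^d, ‖k‖ ≤ c‖v‖} 1/(λ_k)^α ] < ∞` iff `β ≤ α − d/2`,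
for `α ∈ [0, d/2)`, `β ∈ ℝ`, `c ∈ (0,∞)`. -/
theorem growth_rate_finite_sums (d : ℕ) (hd : 1 ≤ d) (α : ℝ) (hα0 : 0 ≤ α)
    (hα : α < (d : ℝ) / 2) (β : ℝ) (c : ℝ) (hc : 0 < c) :
    (⨆ v : Fin d → ℤ, ENNReal.ofReal ((lam v) ^ β) *
        ∑' k : Fin d → ℤ,
          (if znorm k ≤ c * znorm v then ENNReal.ofReal (1 / (lam k) ^ α) else 0)) < ⊤
      ↔ β ≤ α - (d : ℝ) / 2 := by
  set e := (d : ℝ) / 2 - α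
  obtain ⟨C, hC0, hC⟩ := exists_lamSum_ball_le c hα0 hα
  obtain ⟨κ, hκ0, hκ⟩ := exists_lamSum_ball_ge hd hc.ne' hα0 hα
  have hmul (v : Fin d → ℤ) (a : ℝ) :
      lam v ^ β * (a * lam v ^ e) = a * lam v ^ (β + e) := by
    rw [Real.rpow_add (lam_pos v)]
    ring
  have hlow (v : Fin d → ℤ) :
      κ * lam v ^ (β + e) ≤ lam v ^ β * lamSum d α (1 + (c * znorm v) ^ 2) :=
    hmul v κ ▸ mul_le_mul_of_nonneg_left (hκ v) (Real.rpow_nonneg (lam_pos v).le β)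
  have hup (v : Fin d → ℤ) :
      lam v ^ β * lamSum d α (1 + (c * znorm v) ^ 2) ≤ C * lam v ^ (β + e) :=
    hmul v C ▸ mul_le_mul_of_nonneg_left (hC v) (Real.rpow_nonneg (lam_pos v).le β)
  simp_rw [tsum_ite_znorm_le α (mul_nonneg hc.le (znorm_nonneg _)), ← ENNReal.ofReal_mul
    (Real.rpow_nonneg (lam_pos _).le β), iSup_ofReal_lt_top_iff,
    bddAbove_range_iff_of_le_of_le hκ0 hC0 hlow hup, bddAbove_range_lam_rpow_iff hd]
  simp only [e]
  constructor <;> intro h <;> linarith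
end

section
/- Let a, b ∈ (0,∞) and t₁, t₂ ∈ ℝ with t₁ ≤ t₂. Then the improper double integral ∫_{−∞}^{t₁} ∫_{−∞}^{t₂} e^{−a(t₁−s₁+t₂−s₂) − b|s₁−s₂|} ds₂ ds₁ equals e^{−a(t₂−t₁)}/(a(a+b)) + (e^{−b(t₂−t₁)} − e^{−a(t₂−t₁)})/((a−b)(a+b)) if a ≠ b, and equals e^{−a(t₂−t₁)}/(a(a+b)) + (t₂−t₁)·e^{−a(t₂−t₁)}/(a+b) if a = b. -/
/-!
Splitting the inner integral at `s₂ = s₁` removes the absolute value: over `s₂ ≤ s₁` the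
integrand is an exponential decaying towards `-∞`, and over `[s₁, t₂]` it is a multiple of
`e^{(a-b)s₂}`, whose integral degenerates to the length `t₂ - s₁` when `a = b`. The inner integral
is therefore a combination of `e^{2as₁}` and `e^{(a+b)s₁}` (of `e^{2as₁}` and
`(t₁ - s₁)e^{2as₁}` when `a = b`), and each of these integrates explicitly over `(-∞, t₁]`.
-/

open MeasureTheory Set Real

theorem integral_Iic_eq_integral_Ioi_sub {E : Type*} [NormedAddCommGroup E] [NormedSpace ℝ E]
    (f : ℝ → E) (t : ℝ) : ∫ x in Iic t, f x = ∫ y in Ioi 0, f (t - y) := by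
  have hpre : (t - ·) ⁻¹' Iic t = Ici 0 := by ext y; simp
  rw [← integral_Ici_eq_integral_Ioi, ← hpre,
    (Measure.measurePreserving_sub_left volume t).setIntegral_preimage_emb
      (Homeomorph.subLeft t).measurableEmbedding]

theorem integral_sub_mul_exp_mul_Iic {c : ℝ} (hc : 0 < c) (t : ℝ) :
    ∫ x in Iic t, (t - x) * exp (c * x) = exp (c * t) / c ^ 2 := by
  have hgamma : ∫ y in Ioi 0, y * exp (-(c * y)) = (c ^ 2)⁻¹ := by
    have := integral_rpow_mul_exp_neg_mul_Ioi two_pos hc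
    norm_num [Real.Gamma_two] at this
    exact this
  have hsplit (y : ℝ) :
      (t - (t - y)) * exp (c * (t - y)) = exp (c * t) * (y * exp (-(c * y))) := by
    rw [sub_sub_cancel, mul_sub, sub_eq_add_neg, exp_add]; ring
  simp_rw [integral_Iic_eq_integral_Ioi_sub, hsplit, integral_const_mul, hgamma, div_eq_mul_inv]

theorem integrableOn_sub_mul_exp_mul_Iic {c : ℝ} (hc : 0 < c) (t : ℝ) :
    IntegrableOn (fun x ↦ (t - x) * exp (c * x)) (Iic t) :=
  .of_integral_ne_zero <| by rw [integral_sub_mul_exp_mul_Iic hc]; positivity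

theorem integral_exp_mul {c : ℝ} (hc : c ≠ 0) (u v : ℝ) :
    ∫ x in u..v, exp (c * x) = (exp (c * v) - exp (c * u)) / c := by
  rw [intervalIntegral.integral_comp_mul_left exp hc, integral_exp, smul_eq_mul, inv_mul_eq_div]

theorem integral_exp_mul_sub_mul_abs_Iic {c b s t : ℝ} (hcb : 0 < c + b) (hst : s ≤ t) :
    ∫ x in Iic t, exp (c * x - b * |s - x|) =
      exp (c * s) / (c + b) + exp (b * s) * ∫ x in s..t, exp ((c - b) * x) := by
  have hleft : EqOn (fun x ↦ exp (c * x - b * |s - x|))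
      (fun x ↦ exp (-(b * s)) * exp ((c + b) * x)) (Iic s) := by
    intro x (hx : x ≤ s)
    dsimp only
    rw [abs_of_nonneg (sub_nonneg.2 hx), ← exp_add]; ring_nf
  have hright : EqOn (fun x ↦ exp (c * x - b * |s - x|))
      (fun x ↦ exp (b * s) * exp ((c - b) * x)) (Ioc s t) := by
    intro x hx
    dsimp only
    rw [abs_of_neg (sub_neg.2 hx.1), ← exp_add]; ring_nf
  have hint_left : IntegrableOn (fun x ↦ exp (c * x - b * |s - x|)) (Iic s) :=
    IntegrableOn.congr_fun ((integrableOn_exp_mul_Iic hcb s).const_mul _) hleft.symm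
      measurableSet_Iic
  have hint_right : IntegrableOn (fun x ↦ exp (c * x - b * |s - x|)) (Ioc s t) :=
    Continuous.integrableOn_Ioc (by fun_prop)
  rw [← Iic_union_Ioc_eq_Iic hst, setIntegral_union (Iic_disjoint_Ioc le_rfl) measurableSet_Ioc
    hint_left hint_right, setIntegral_congr_fun measurableSet_Iic hleft,
    setIntegral_congr_fun measurableSet_Ioc hright, integral_const_mul, integral_const_mul,
    integral_exp_mul_Iic hcb, intervalIntegral.integral_of_le hst, mul_div_assoc', ← exp_add]
  ring_nf

theorem integral_exp_neg_mul_sub_mul_abs_Iic {a b : ℝ} (hab : 0 < a + b) (t₁ : ℝ) {s₁ t₂ : ℝ}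
    (hs : s₁ ≤ t₂) :
    ∫ s₂ in Iic t₂, exp (-a * (t₁ - s₁ + t₂ - s₂) - b * |s₁ - s₂|) =
      exp (-a * (t₁ + t₂)) *
        (exp (2 * a * s₁) / (a + b) + exp ((a + b) * s₁) * ∫ x in s₁..t₂, exp ((a - b) * x)) := by
  have hsplit (s₂ : ℝ) : exp (-a * (t₁ - s₁ + t₂ - s₂) - b * |s₁ - s₂|) =
      exp (-a * (t₁ + t₂) + a * s₁) * exp (a * s₂ - b * |s₁ - s₂|) := by
    rw [← exp_add]; ring_nf
  have h₁ : exp (-a * (t₁ + t₂) + a * s₁) * exp (a * s₁) =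
      exp (-a * (t₁ + t₂)) * exp (2 * a * s₁) := by
    rw [← exp_add, ← exp_add]; ring_nf
  have h₂ : exp (-a * (t₁ + t₂) + a * s₁) * exp (b * s₁) =
      exp (-a * (t₁ + t₂)) * exp ((a + b) * s₁) := by
    rw [← exp_add, ← exp_add]; ring_nf
  simp_rw [hsplit, integral_const_mul, integral_exp_mul_sub_mul_abs_Iic hab hs]
  linear_combination h₁ / (a + b) + (∫ x in s₁..t₂, exp ((a - b) * x)) * h₂

theorem time_integral_conv_of_ne {a b : ℝ} (ha : 0 < a) (hab : 0 < a + b) (hne : a ≠ b)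
    {t₁ t₂ : ℝ} (h12 : t₁ ≤ t₂) :
    ∫ s₁ in Iic t₁, ∫ s₂ in Iic t₂, exp (-a * (t₁ - s₁ + t₂ - s₂) - b * |s₁ - s₂|) =
      exp (-a * (t₂ - t₁)) / (a * (a + b)) +
        (exp (-b * (t₂ - t₁)) - exp (-a * (t₂ - t₁))) / ((a - b) * (a + b)) := by
  have ha₂ : 0 < 2 * a := by positivity
  have inner : EqOn (fun s₁ ↦ ∫ s₂ in Iic t₂, exp (-a * (t₁ - s₁ + t₂ - s₂) - b * |s₁ - s₂|))
      (fun s₁ ↦ exp (-a * (t₁ + t₂)) * ((1 / (a + b) - 1 / (a - b)) * exp (2 * a * s₁) +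
        exp ((a - b) * t₂) / (a - b) * exp ((a + b) * s₁))) (Iic t₁) := by
    intro s₁ (hs₁ : s₁ ≤ t₁)
    have hexp : exp ((a + b) * s₁) * exp ((a - b) * s₁) = exp (2 * a * s₁) := by
      rw [← exp_add]; ring_nf
    dsimp only
    rw [integral_exp_neg_mul_sub_mul_abs_Iic hab t₁ (hs₁.trans h12),
      integral_exp_mul (sub_ne_zero.2 hne)]
    linear_combination -(exp (-a * (t₁ + t₂)) / (a - b)) * hexp
  rw [setIntegral_congr_fun measurableSet_Iic inner, integral_const_mul,
    integral_add ((integrableOn_exp_mul_Iic ha₂ _).const_mul _)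
      ((integrableOn_exp_mul_Iic hab _).const_mul _),
    integral_const_mul, integral_const_mul, integral_exp_mul_Iic ha₂, integral_exp_mul_Iic hab]
  have h₁ : exp (-a * (t₁ + t₂)) * exp (2 * a * t₁) = exp (-a * (t₂ - t₁)) := by
    rw [← exp_add]; ring_nf
  have h₂ : exp (-a * (t₁ + t₂)) * exp ((a - b) * t₂) * exp ((a + b) * t₁) =
      exp (-b * (t₂ - t₁)) := by
    rw [← exp_add, ← exp_add]; ring_nf
  linear_combination (norm := skip) (1 / (a + b) - 1 / (a - b)) / (2 * a) * h₁ +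
    h₂ / ((a - b) * (a + b))
  field_simp
  ring

theorem time_integral_conv_of_eq {a : ℝ} (ha : 0 < a) {t₁ t₂ : ℝ} (h12 : t₁ ≤ t₂) :
    ∫ s₁ in Iic t₁, ∫ s₂ in Iic t₂, exp (-a * (t₁ - s₁ + t₂ - s₂) - a * |s₁ - s₂|) =
      exp (-a * (t₂ - t₁)) / (a * (a + a)) + (t₂ - t₁) * exp (-a * (t₂ - t₁)) / (a + a) := by
  have ha₂ : 0 < 2 * a := by positivity
  have inner : EqOn (fun s₁ ↦ ∫ s₂ in Iic t₂, exp (-a * (t₁ - s₁ + t₂ - s₂) - a * |s₁ - s₂|))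
      (fun s₁ ↦ exp (-a * (t₁ + t₂)) * ((1 / (2 * a) + (t₂ - t₁)) * exp (2 * a * s₁) +
        (t₁ - s₁) * exp (2 * a * s₁))) (Iic t₁) := by
    intro s₁ (hs₁ : s₁ ≤ t₁)
    dsimp only
    rw [integral_exp_neg_mul_sub_mul_abs_Iic (by positivity) t₁ (hs₁.trans h12)]
    simp only [sub_self, zero_mul, exp_zero, intervalIntegral.integral_const, smul_eq_mul,
      mul_one, ← two_mul]
    ring
  rw [setIntegral_congr_fun measurableSet_Iic inner, integral_const_mul,
    integral_add ((integrableOn_exp_mul_Iic ha₂ _).const_mul _)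
      (integrableOn_sub_mul_exp_mul_Iic ha₂ _),
    integral_const_mul, integral_exp_mul_Iic ha₂, integral_sub_mul_exp_mul_Iic ha₂]
  have h₁ : exp (-a * (t₁ + t₂)) * exp (2 * a * t₁) = exp (-a * (t₂ - t₁)) := by
    rw [← exp_add]; ring_nf
  linear_combination (norm := skip)
    (1 / (2 * a) * (1 / (2 * a) + (t₂ - t₁)) + 1 / (2 * a) ^ 2) * h₁
  field_simp
  ring

/-- Time integrals for convolutional Wick powers: for `a, b > 0` and `t₁ ≤ t₂`,
`∫_{−∞}^{t₁} ∫_{−∞}^{t₂} e^{−a(t₁−s₁+t₂−s₂) − b|s₁−s₂|} ds₂ ds₁` equals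
`e^{−a(t₂−t₁)}/(a(a+b)) + (e^{−b(t₂−t₁)} − e^{−a(t₂−t₁)})/((a−b)(a+b))` if `a ≠ b`,
and equals `e^{−a(t₂−t₁)}/(a(a+b)) + (t₂−t₁)e^{−a(t₂−t₁)}/(a+b)` if `a = b`. -/
theorem time_integral_conv (a b : ℝ) (ha : 0 < a) (hb : 0 < b)
    (t₁ t₂ : ℝ) (h12 : t₁ ≤ t₂) :
    (a ≠ b →
      (∫ s₁ in Set.Iic t₁, ∫ s₂ in Set.Iic t₂,
          Real.exp (-a * (t₁ - s₁ + t₂ - s₂) - b * |s₁ - s₂|))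
        = Real.exp (-a * (t₂ - t₁)) / (a * (a + b))
          + (Real.exp (-b * (t₂ - t₁)) - Real.exp (-a * (t₂ - t₁)))
            / ((a - b) * (a + b)))
    ∧ (a = b →
      (∫ s₁ in Set.Iic t₁, ∫ s₂ in Set.Iic t₂,
          Real.exp (-a * (t₁ - s₁ + t₂ - s₂) - b * |s₁ - s₂|))
        = Real.exp (-a * (t₂ - t₁)) / (a * (a + b))
          + (t₂ - t₁) * Real.exp (-a * (t₂ - t₁)) / (a + b)) := by
  refine ⟨fun hne ↦ time_integral_conv_of_ne ha (by positivity) hne h12, ?_⟩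
  rintro rfl
  exact time_integral_conv_of_eq ha h12
end

section
/- Let n, d ∈ ℕ with n ≥ 2 and d ≥ 2 satisfy (n+1)/(n−1) ≤ d/2. Then for every v ∈ ℤ^d the sum Σ_{l₁,…,l_n ∈ ℤ^d with l₁+⋯+l_n = v} 1 / [ (λ_{l₁} ⋯ λ_{l_n}) · (λ_v + λ_{l₁} + ⋯ + λ_{l_n}) ] is infinite, i.e. the family of (positive) summands indexed by {(l₁,…,l_n) ∈ (ℤ^d)^n : l₁+⋯+l_n = v} is not summable. -/
open Finset

lemma lam_one_le {d : ℕ} (x : Fin d → ℤ) : 1 ≤ lam x := by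
  have : (0:ℝ) ≤ ∑ i, ((x i : ℝ)) ^ 2 := Finset.sum_nonneg fun i _ => sq_nonneg _
  simp only [lam]; linarith

lemma aux_not_summable (s : ℕ) (hs : 1 ≤ s) (c : ℝ) (hc : 0 < c) :
    ¬ Summable (fun m : Fin (2*s) → ℤ => c / (1 + ∑ k, ((m k : ℝ)) ^ 2) ^ s) := by
  classical
  intro hS
  set g : (Fin (2*s) → ℤ) → ℝ := fun m => c / (1 + ∑ k, ((m k : ℝ)) ^ 2) ^ s with hg
  have hden : ∀ m : Fin (2*s) → ℤ, (1:ℝ) ≤ 1 + ∑ k, ((m k : ℝ)) ^ 2 := by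
    intro m
    have : (0:ℝ) ≤ ∑ k, ((m k : ℝ)) ^ 2 := Finset.sum_nonneg fun i _ => sq_nonneg _
    linarith
  have hgpos : ∀ m, 0 < g m := fun m =>
    div_pos hc (pow_pos (lt_of_lt_of_le one_pos (hden m)) s)
  set B : ℕ → Finset (Fin (2*s) → ℤ) :=
    fun N => Fintype.piFinset (fun _ => Finset.Icc (-(N:ℤ)) N) with hB
  have hBmono : ∀ {N₁ N₂ : ℕ}, N₁ ≤ N₂ → B N₁ ⊆ B N₂ := by
    intro N₁ N₂ hN
    refine Fintype.piFinset_subset _ _ fun a => Finset.Icc_subset_Icc ?_ ?_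
    · exact neg_le_neg (by exact_mod_cast hN)
    · exact_mod_cast hN
  have hBcard : ∀ N : ℕ, (B N).card = (2*N+1)^(2*s) := by
    intro N
    rw [hB]
    rw [Fintype.card_piFinset]
    simp only [Int.card_Icc, Finset.prod_const, Finset.card_univ, Fintype.card_fin]
    congr 1
    omega
  set A : ℕ → Finset (Fin (2*s) → ℤ) := fun N => B N \ B (N-1) with hA
  have hAdisj : ∀ N₁ N₂ : ℕ, N₁ < N₂ → Disjoint (A N₁) (A N₂) := by
    intro N₁ N₂ hlt
    have h1 : A N₁ ⊆ B (N₂ - 1) := (Finset.sdiff_subset).trans (hBmono (by omega))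
    exact Finset.disjoint_left.mpr fun m hm1 hm2 => (Finset.mem_sdiff.mp hm2).2 (h1 hm1)
  set h : ℕ → ℝ := fun N => ∑ m ∈ A N, g m with hh
  have hhnn : ∀ N, 0 ≤ h N := fun N => Finset.sum_nonneg fun m _ => (hgpos m).le
  have hsum_h : Summable h := by
    apply summable_of_sum_le (c := ∑' m, g m) hhnn
    intro u
    have hdisj : (↑u : Set ℕ).PairwiseDisjoint A := by
      intro x _ y _ hxy
      rcases lt_or_gt_of_ne hxy with hl | hl
      · exact hAdisj x y hl
      · exact (hAdisj y x hl).symm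
    rw [hh, ← Finset.sum_biUnion hdisj]
    exact Summable.sum_le_tsum _ (fun m _ => (hgpos m).le) hS
  -- lower bound on h N for N ≥ 1
  set C : ℝ := 2*c/(3*s)^s with hC
  have hspos : (0:ℝ) < 3*s := by positivity
  have hCpos : 0 < C := by
    rw [hC]; positivity
  have hlow : ∀ N : ℕ, 1 ≤ N → C / N ≤ h N := by
    intro N hN1
    have hNR : (1:ℝ) ≤ (N:ℝ) := by exact_mod_cast hN1
    have hNpos : (0:ℝ) < N := by linarith
    -- each term on A N is at least c / ((3*s)^s * N^(2*s))
    have hterm : ∀ m ∈ A N, c / ((3*(s:ℝ))^s * (N:ℝ)^(2*s)) ≤ g m := by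
      intro m hm
      have hmB : m ∈ B N := Finset.sdiff_subset hm
      have hcoord : ∀ k0, ((m k0 : ℝ))^2 ≤ (N:ℝ)^2 := by
        intro k0
        have := Fintype.mem_piFinset.mp hmB k0
        rw [Finset.mem_Icc] at this
        have h1 : |(m k0 : ℝ)| ≤ (N:ℝ) := by
          rw [abs_le]; constructor <;> [exact_mod_cast this.1; exact_mod_cast this.2]
        calc ((m k0 : ℝ))^2 = |(m k0 : ℝ)|^2 := (sq_abs _).symm
          _ ≤ (N:ℝ)^2 := by nlinarith [abs_nonneg ((m k0 : ℝ))]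
      have hsumsq : ∑ k0, ((m k0 : ℝ))^2 ≤ (2*s) * (N:ℝ)^2 := by
        calc ∑ k0, ((m k0 : ℝ))^2 ≤ ∑ _k0 : Fin (2*s), (N:ℝ)^2 :=
              Finset.sum_le_sum fun k0 _ => hcoord k0
          _ = (2*s) * (N:ℝ)^2 := by simp [mul_comm]
      have hDb : 1 + ∑ k0, ((m k0 : ℝ))^2 ≤ 3*(s:ℝ)*(N:ℝ)^2 := by
        have hs1 : (1:ℝ) ≤ (s:ℝ) := by exact_mod_cast hs
        nlinarith [hsumsq]
      have hpow : (1 + ∑ k0, ((m k0 : ℝ))^2)^s ≤ (3*(s:ℝ))^s * (N:ℝ)^(2*s) := by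
        calc (1 + ∑ k0, ((m k0 : ℝ))^2)^s ≤ (3*(s:ℝ)*(N:ℝ)^2)^s :=
              pow_le_pow_left₀ (le_trans zero_le_one (hden m)) hDb s
          _ = (3*(s:ℝ))^s * (N:ℝ)^(2*s) := by rw [mul_pow, ← pow_mul]
      have hkey : c / ((3*(s:ℝ))^s * (N:ℝ)^(2*s)) ≤ c / (1 + ∑ k0, ((m k0 : ℝ))^2)^s := by
        gcongr
      simpa [hg] using hkey
    -- cardinality of A N
    have hsub : B (N-1) ⊆ B N := hBmono (by omega)
    have hcardA : (A N).card = (2*N+1)^(2*s) - (2*(N-1)+1)^(2*s) := by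
      rw [hA, Finset.card_sdiff_of_subset hsub, hBcard, hBcard]
    have hcardle : (2*(N-1)+1)^(2*s) ≤ (2*N+1)^(2*s) :=
      Nat.pow_le_pow_left (by omega) _
    have hcardR : ((A N).card : ℝ) = (2*(N:ℝ)+1)^(2*s) - (2*((N:ℝ)-1)+1)^(2*s) := by
      rw [hcardA, Nat.cast_sub hcardle]
      push_cast [Nat.cast_sub hN1]
      ring_nf
    -- real inequality : 2 * N^(2s-1) ≤ card
    obtain ⟨t, ht⟩ : ∃ t, 2*s = t + 1 := ⟨2*s - 1, by omega⟩
    have hcard_low : 2 * (N:ℝ)^t ≤ ((A N).card : ℝ) := by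
      rw [hcardR]
      have hx : (0:ℝ) ≤ 2*(N:ℝ) - 1 := by linarith
      have h1 : (2*((N:ℝ)-1)+1)^(2*s) ≤ (2*(N:ℝ)-1) * (2*(N:ℝ)+1)^t := by
        have : (2*((N:ℝ)-1)+1) = 2*(N:ℝ)-1 := by ring
        rw [this, ht, pow_succ']
        have hb : (2*(N:ℝ)-1)^t ≤ (2*(N:ℝ)+1)^t :=
          pow_le_pow_left₀ hx (by linarith) t
        nlinarith [pow_nonneg hx t]
      have h2 : (2*(N:ℝ)+1)^(2*s) = (2*(N:ℝ)+1) * (2*(N:ℝ)+1)^t := by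
        rw [ht, pow_succ']
      have h3 : (N:ℝ)^t ≤ (2*(N:ℝ)+1)^t := pow_le_pow_left₀ hNpos.le (by linarith) t
      nlinarith [pow_nonneg hNpos.le t]
    -- combine
    have hsum_low : ((A N).card : ℝ) * (c / ((3*(s:ℝ))^s * (N:ℝ)^(2*s))) ≤ h N := by
      rw [hh]
      have := Finset.card_nsmul_le_sum (A N) g _ hterm
      simpa [nsmul_eq_mul] using this
    have hmt_pos : (0:ℝ) < c / ((3*(s:ℝ))^s * (N:ℝ)^(2*s)) := by positivity
    calc C / N = 2 * (N:ℝ)^t * (c / ((3*(s:ℝ))^s * (N:ℝ)^(2*s))) := by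
          rw [hC, ht]
          field_simp
          ring
      _ ≤ ((A N).card : ℝ) * (c / ((3*(s:ℝ))^s * (N:ℝ)^(2*s))) := by
          exact mul_le_mul_of_nonneg_right hcard_low hmt_pos.le
      _ ≤ h N := hsum_low
  -- conclude
  have hsumC : Summable (fun N : ℕ => C / N) := by
    apply Summable.of_nonneg_of_le (fun N => by positivity) _ hsum_h
    intro N
    rcases Nat.eq_zero_or_pos N with rfl | hN
    · simpa using hhnn 0
    · exact hlow N hN
  have : Summable (fun N : ℕ => 1 / (N:ℝ)) := by
    have h2 := hsumC.mul_left C⁻¹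
    refine h2.congr fun N => ?_
    field_simp
  exact Real.not_summable_one_div_natCast this


set_option maxHeartbeats 1000000 in
/-- Divergence: if `n, d ≥ 2` and `(n+1)/(n−1) ≤ d/2`, then for every `v ∈ ℤ^d` the
family `(l₁,…,l_n) ↦ 1/[(λ_{l₁}⋯λ_{l_n})(λ_v + λ_{l₁} + ⋯ + λ_{l_n})]`, indexed by
the tuples with `l₁ + ⋯ + l_n = v`, is not summable. -/
theorem divergence_sum_tool (n d : ℕ) (hn : 2 ≤ n) (hd : 2 ≤ d)
    (h : ((n : ℝ) + 1) / ((n : ℝ) - 1) ≤ (d : ℝ) / 2) (v : Fin d → ℤ) :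
    ¬ Summable (fun l : {l : Fin n → (Fin d → ℤ) // ∑ j, l j = v} =>
        1 / ((∏ j, lam (l.1 j)) * (lam v + ∑ j, lam (l.1 j)))) := by
  classical
  intro hS
  obtain ⟨k, rfl⟩ : ∃ k, n = k + 2 := ⟨n - 2, by omega⟩
  -- the numeric condition
  have hcard : 2*(k+3) ≤ (k+1)*d := by
    rw [div_le_div_iff₀ (by push_cast; linarith) (by norm_num)] at h
    have : ((2*(k+3) : ℕ) : ℝ) ≤ (((k+1)*d : ℕ) : ℝ) := by push_cast at h ⊢; linarith
    exact_mod_cast this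
  obtain ⟨ψ⟩ : Nonempty (Fin (2*(k+3)) ↪ Fin (k+1) × Fin d) := by
    apply Function.Embedding.nonempty_of_card_le
    simpa using hcard
  set a : (Fin (2*(k+3)) → ℤ) → (Fin (k+1) × Fin d → ℤ) :=
    fun m => Function.extend ψ m 0 with ha
  set r : (Fin (2*(k+3)) → ℤ) → Fin (k+1) → Fin d → ℤ :=
    fun m j i => a m (j, i) with hr
  set L : (Fin (2*(k+3)) → ℤ) → Fin (k+2) → Fin d → ℤ :=
    fun m => Fin.cons (v - ∑ j, r m j) (r m) with hL
  have hLsum : ∀ m, ∑ j, L m j = v := by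
    intro m
    rw [hL]
    simp only [Fin.sum_cons]
    abel
  have hΦinj : Function.Injective (fun m =>
      (⟨L m, hLsum m⟩ : {l : Fin (k+2) → (Fin d → ℤ) // ∑ j, l j = v})) := by
    intro m m' he
    have hval : L m = L m' := congrArg Subtype.val he
    funext k0
    have h1 : L m (Fin.succ (ψ k0).1) (ψ k0).2 = L m' (Fin.succ (ψ k0).1) (ψ k0).2 := by
      rw [hval]
    simpa [hL, hr, ha, Fin.cons_succ, ψ.injective.extend_apply] using h1
  -- key sum identity
  have hsum_a : ∀ m, ∑ p : Fin (k+1) × Fin d, ((a m p : ℝ))^2 = ∑ k0, ((m k0 : ℝ))^2 := by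
    intro m
    have h0 : ∀ p ∈ (Finset.univ : Finset (Fin (k+1) × Fin d)),
        p ∉ Finset.image ψ Finset.univ → ((a m p : ℝ))^2 = 0 := by
      intro p _ hp
      have hnex : ¬ ∃ k0, ψ k0 = p := by
        simpa [Finset.mem_image] using hp
      simp [ha, Function.extend_apply' _ _ _ hnex]
    rw [← Finset.sum_subset (Finset.subset_univ (Finset.image ψ Finset.univ)) h0,
        Finset.sum_image (fun x _ y _ hxy => ψ.injective hxy)]
    simp [ha, ψ.injective.extend_apply]
  set Mf : (Fin (2*(k+3)) → ℤ) → ℝ := fun m => 1 + ∑ k0, ((m k0 : ℝ))^2 with hMf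
  have hM1 : ∀ m, 1 ≤ Mf m := by
    intro m
    have : (0:ℝ) ≤ ∑ k0, ((m k0 : ℝ))^2 := Finset.sum_nonneg fun i _ => sq_nonneg _
    simp only [hMf]; linarith
  -- bound for the free components
  have hr_bound : ∀ m j, lam (r m j) ≤ Mf m := by
    intro m j
    have hfiber : ∑ i, ((a m (j,i) : ℝ))^2 ≤ ∑ p : Fin (k+1) × Fin d, ((a m p : ℝ))^2 := by
      rw [Fintype.sum_prod_type]
      exact Finset.single_le_sum (f := fun j' => ∑ i, ((a m (j',i) : ℝ))^2)
        (fun j' _ => Finset.sum_nonneg fun i _ => sq_nonneg _) (Finset.mem_univ j)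
    have heq : lam (r m j) = 1 + ∑ i, ((a m (j,i) : ℝ))^2 := by rw [lam, hr]
    have hMeq : Mf m = 1 + ∑ k0, ((m k0 : ℝ))^2 := rfl
    rw [heq, hMeq, ← hsum_a m]
    linarith
  -- bound for the head component
  have hhead_bound : ∀ m, lam (v - ∑ j, r m j) ≤ ((k:ℝ)+2) * lam v * Mf m := by
    intro m
    have hper : ∀ i, (((v - ∑ j, r m j) i : ℤ) : ℝ)^2
        ≤ ((k:ℝ)+2) * (((v i : ℝ))^2 + ∑ j, ((r m j i : ℝ))^2) := by
      intro i
      set F : Fin (k+2) → ℝ := Fin.cons ((v i : ℝ)) (fun j => -((r m j i : ℝ))) with hF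
      have hFsum : ∑ j, F j = (v i : ℝ) - ∑ j, ((r m j i : ℝ)) := by
        rw [hF, Fin.sum_cons, Finset.sum_neg_distrib]
        ring
      have hFsq : ∑ j, (F j)^2 = ((v i : ℝ))^2 + ∑ j, ((r m j i : ℝ))^2 := by
        rw [Fin.sum_univ_succ]
        simp [hF, Fin.cons_succ, Fin.cons_zero]
      have hcoordeq : (((v - ∑ j, r m j) i : ℤ) : ℝ) = (v i : ℝ) - ∑ j, ((r m j i : ℝ)) := by
        simp [Pi.sub_apply, Finset.sum_apply]
      have hsq := sq_sum_le_card_mul_sum_sq (s := (Finset.univ : Finset (Fin (k+2)))) (f := F)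
      rw [hFsum, hFsq] at hsq
      rw [hcoordeq]
      calc ((v i : ℝ) - ∑ j, ((r m j i : ℝ)))^2
          ≤ (Finset.univ.card : ℝ) * (((v i : ℝ))^2 + ∑ j, ((r m j i : ℝ))^2) := by
            exact_mod_cast hsq
        _ = ((k:ℝ)+2) * (((v i : ℝ))^2 + ∑ j, ((r m j i : ℝ))^2) := by
            rw [Finset.card_univ, Fintype.card_fin]; push_cast; ring
    have hswap : ∑ i, ∑ j, ((r m j i : ℝ))^2 = ∑ p : Fin (k+1) × Fin d, ((a m p : ℝ))^2 := by
      rw [Fintype.sum_prod_type, Finset.sum_comm]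
    have hsum_i : ∑ i, (((v - ∑ j, r m j) i : ℤ) : ℝ)^2
        ≤ ((k:ℝ)+2) * ((∑ i, ((v i : ℝ))^2) + (Mf m - 1)) := by
      calc ∑ i, (((v - ∑ j, r m j) i : ℤ) : ℝ)^2
          ≤ ∑ i, ((k:ℝ)+2) * (((v i : ℝ))^2 + ∑ j, ((r m j i : ℝ))^2) :=
            Finset.sum_le_sum fun i _ => hper i
        _ = ((k:ℝ)+2) * ((∑ i, ((v i : ℝ))^2) + ∑ i, ∑ j, ((r m j i : ℝ))^2) := by
            rw [← Finset.mul_sum, Finset.sum_add_distrib]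
        _ = ((k:ℝ)+2) * ((∑ i, ((v i : ℝ))^2) + (Mf m - 1)) := by
            rw [hswap, hsum_a m, hMf]; ring_nf
    have hlamhead : lam (v - ∑ j, r m j) = 1 + ∑ i, (((v - ∑ j, r m j) i : ℤ) : ℝ)^2 := rfl
    have hlamv : lam v = 1 + ∑ i, ((v i : ℝ))^2 := rfl
    have hV : (0:ℝ) ≤ ∑ i, ((v i : ℝ))^2 := Finset.sum_nonneg fun i _ => sq_nonneg _
    have hM := hM1 m
    rw [hlamhead, hlamv]
    nlinarith [hsum_i, mul_nonneg (mul_nonneg (by positivity : (0:ℝ) ≤ (k:ℝ)+2) hV)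
      (by linarith : (0:ℝ) ≤ Mf m - 1)]
  -- product bound
  have hprod : ∀ m, ∏ j : Fin (k+2), lam (L m j) ≤ (((k:ℝ)+2) * lam v) * (Mf m)^(k+2) := by
    intro m
    have h1 : ∏ j : Fin (k+2), lam (L m j)
        = lam (v - ∑ j, r m j) * ∏ j : Fin (k+1), lam (r m j) := by
      rw [hL, Fin.prod_univ_succ]
      simp [Fin.cons_zero, Fin.cons_succ]
    have h2 : ∏ j : Fin (k+1), lam (r m j) ≤ (Mf m)^(k+1) := by
      calc ∏ j : Fin (k+1), lam (r m j) ≤ ∏ _j : Fin (k+1), Mf m :=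
            Finset.prod_le_prod (fun j _ => le_trans zero_le_one (lam_one_le (r m j)))
              (fun j _ => hr_bound m j)
        _ = (Mf m)^(k+1) := by simp
    have h3 : (0:ℝ) ≤ ∏ j : Fin (k+1), lam (r m j) :=
      Finset.prod_nonneg fun j _ => le_trans zero_le_one (lam_one_le (r m j))
    have h4 : (0:ℝ) ≤ ((k:ℝ)+2) * lam v * Mf m := by
      have := lam_one_le v; have := hM1 m; positivity
    rw [h1]
    calc lam (v - ∑ j, r m j) * ∏ j : Fin (k+1), lam (r m j)
        ≤ (((k:ℝ)+2) * lam v * Mf m) * (Mf m)^(k+1) :=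
          mul_le_mul (hhead_bound m) h2 h3 h4
      _ = (((k:ℝ)+2) * lam v) * (Mf m)^(k+2) := by rw [pow_succ]; ring
  -- sum bound
  have hsum_b : ∀ m, lam v + ∑ j : Fin (k+2), lam (L m j)
      ≤ (lam v + ((k:ℝ)+2) * lam v + ((k:ℝ)+1)) * Mf m := by
    intro m
    have h1 : ∑ j : Fin (k+2), lam (L m j)
        = lam (v - ∑ j, r m j) + ∑ j : Fin (k+1), lam (r m j) := by
      rw [hL, Fin.sum_univ_succ]
      simp [Fin.cons_zero, Fin.cons_succ]
    have h2 : ∑ j : Fin (k+1), lam (r m j) ≤ ((k:ℝ)+1) * Mf m := by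
      calc ∑ j : Fin (k+1), lam (r m j) ≤ ∑ _j : Fin (k+1), Mf m :=
            Finset.sum_le_sum fun j _ => hr_bound m j
        _ = ((k:ℝ)+1) * Mf m := by
            rw [Finset.sum_const, Finset.card_univ, Fintype.card_fin, nsmul_eq_mul]
            push_cast; ring
    have h3 : lam v ≤ lam v * Mf m :=
      le_mul_of_one_le_right (le_trans zero_le_one (lam_one_le v)) (hM1 m)
    have h4 := hhead_bound m
    rw [h1]
    have hexp : (lam v + ((k:ℝ)+2) * lam v + ((k:ℝ)+1)) * Mf m
        = lam v * Mf m + ((k:ℝ)+2) * lam v * Mf m + ((k:ℝ)+1) * Mf m := by ring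
    rw [hexp]
    linarith
  -- final comparison
  set K : ℝ := (((k:ℝ)+2) * lam v) * (lam v + ((k:ℝ)+2) * lam v + ((k:ℝ)+1)) with hK
  have hlamv1 := lam_one_le v
  have hKpos : 0 < K := by
    rw [hK]
    have h0 : (0:ℝ) < (k:ℝ) + 2 := by positivity
    have h1 : (0:ℝ) < lam v := by linarith
    have h2 : (0:ℝ) < lam v + ((k:ℝ)+2) * lam v + ((k:ℝ)+1) := by nlinarith
    exact mul_pos (mul_pos h0 h1) h2
  have hbound : ∀ m : Fin (2*(k+3)) → ℤ,
      (1/K) / (1 + ∑ k0, ((m k0 : ℝ))^2)^(k+3)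
        ≤ 1 / ((∏ j, lam (L m j)) * (lam v + ∑ j, lam (L m j))) := by
    intro m
    have hA1 : (1:ℝ) ≤ ∏ j : Fin (k+2), lam (L m j) := by
      calc (1:ℝ) = ∏ _j : Fin (k+2), (1:ℝ) := by simp
        _ ≤ ∏ j, lam (L m j) :=
          Finset.prod_le_prod (fun _ _ => zero_le_one) (fun j _ => lam_one_le _)
    have hA2 : (1:ℝ) ≤ lam v + ∑ j : Fin (k+2), lam (L m j) := by
      have : (0:ℝ) ≤ ∑ j : Fin (k+2), lam (L m j) :=
        Finset.sum_nonneg fun j _ => le_trans zero_le_one (lam_one_le (L m j))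
      linarith
    have hApos : (0:ℝ) < (∏ j, lam (L m j)) * (lam v + ∑ j, lam (L m j)) := by nlinarith
    have hAle : (∏ j, lam (L m j)) * (lam v + ∑ j, lam (L m j)) ≤ K * (Mf m)^(k+3) := by
      have hMp : (0:ℝ) < Mf m := lt_of_lt_of_le one_pos (hM1 m)
      calc (∏ j, lam (L m j)) * (lam v + ∑ j, lam (L m j))
          ≤ ((((k:ℝ)+2) * lam v) * (Mf m)^(k+2)) *
            ((lam v + ((k:ℝ)+2) * lam v + ((k:ℝ)+1)) * Mf m) := by
            apply mul_le_mul (hprod m) (hsum_b m) (by linarith) (by positivity)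
        _ = K * (Mf m)^(k+3) := by rw [hK, pow_succ]; ring
    have : 1 / (K * (Mf m)^(k+3)) ≤ 1 / ((∏ j, lam (L m j)) * (lam v + ∑ j, lam (L m j))) :=
      one_div_le_one_div_of_le hApos hAle
    calc (1/K) / (1 + ∑ k0, ((m k0 : ℝ))^2)^(k+3) = 1 / (K * (Mf m)^(k+3)) := by
          rw [hMf, div_div]
      _ ≤ _ := this
  have hS1 : Summable ((fun l : {l : Fin (k+2) → (Fin d → ℤ) // ∑ j, l j = v} =>
      1 / ((∏ j, lam (l.1 j)) * (lam v + ∑ j, lam (l.1 j)))) ∘ (fun m => ⟨L m, hLsum m⟩)) :=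
    hS.comp_injective hΦinj
  have hS2 : Summable (fun m : Fin (2*(k+3)) → ℤ =>
      (1/K) / (1 + ∑ k0, ((m k0 : ℝ))^2)^(k+3)) := by
    refine Summable.of_nonneg_of_le (fun m => ?_) (fun m => hbound m) hS1
    have hMp : (0:ℝ) < (1 + ∑ k0, ((m k0 : ℝ))^2) := lt_of_lt_of_le one_pos (hM1 m)
    positivity
  exact aux_not_summable (k+3) (by omega) (1/K) (by positivity) hS2
end

section
/- For every y ∈ (−∞, 0] and every θ ∈ [0,1] one has |y|·(1 − e^{y/2})/2 ≤ e^y − (1 + y) ≤ |y|^{1+θ}/(1+θ); in particular e^y − (1+y) ≤ |y|^{1+θ} for all y ≤ 0 and θ ∈ [0,1]. -/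
lemma aux_upper (θ : ℝ) (hθ0 : 0 ≤ θ) (hθ1 : θ ≤ 1) {x : ℝ} (hx : 0 ≤ x) :
    x - 1 + Real.exp (-x) ≤ x ^ (1 + θ) / (1 + θ) := by
  set p : ℝ := 1 + θ with hp_def
  have hp1 : 1 ≤ p := by simp [hp_def]; linarith
  have hp0 : 0 < p := by linarith
  have key : MonotoneOn (fun x : ℝ => x ^ p / p - (x - 1 + Real.exp (-x))) (Set.Ici 0) := by
    apply monotoneOn_of_deriv_nonneg (convex_Ici 0)
    · apply Continuous.continuousOn
      have h1 : Continuous fun x : ℝ => x ^ p := by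
        exact Real.continuous_rpow_const (le_of_lt hp0)
      continuity
    · intro t ht
      rw [interior_Ici] at ht
      have h1 : HasDerivAt (fun x : ℝ => x ^ p / p - (x - 1 + Real.exp (-x)))
          (p * t ^ (p - 1) / p - (1 + Real.exp (-t) * (-1))) t := by
        have hr : HasDerivAt (fun x : ℝ => x ^ p) (p * t ^ (p - 1)) t :=
          Real.hasDerivAt_rpow_const (Or.inl (ne_of_gt ht))
        have he : HasDerivAt (fun x : ℝ => Real.exp (-x)) (Real.exp (-t) * (-1)) t :=
          (Real.hasDerivAt_exp (-t)).comp t (hasDerivAt_neg t)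
        exact (hr.div_const p).sub ((hasDerivAt_id t |>.sub_const 1).add he)
      exact h1.differentiableAt.differentiableWithinAt
    · intro t ht
      rw [interior_Ici] at ht
      have h1 : HasDerivAt (fun x : ℝ => x ^ p / p - (x - 1 + Real.exp (-x)))
          (p * t ^ (p - 1) / p - (1 + Real.exp (-t) * (-1))) t := by
        have hr : HasDerivAt (fun x : ℝ => x ^ p) (p * t ^ (p - 1)) t :=
          Real.hasDerivAt_rpow_const (Or.inl (ne_of_gt ht))
        have he : HasDerivAt (fun x : ℝ => Real.exp (-x)) (Real.exp (-t) * (-1)) t :=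
          (Real.hasDerivAt_exp (-t)).comp t (hasDerivAt_neg t)
        exact (hr.div_const p).sub ((hasDerivAt_id t |>.sub_const 1).add he)
      rw [h1.deriv]
      have hsimp : p * t ^ (p - 1) / p = t ^ (p - 1) := by
        field_simp
      have hpt : p - 1 = θ := by simp [hp_def]
      rw [hsimp, hpt]
      -- need t ^ θ - (1 + exp(-t) * (-1)) ≥ 0, i.e. t^θ ≥ 1 - exp(-t)
      have hexp : 0 < Real.exp (-t) := Real.exp_pos _
      rcases le_or_gt t 1 with h | h
      · have h2 : t ^ (1:ℝ) ≤ t ^ θ :=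
          Real.rpow_le_rpow_of_exponent_ge ht h hθ1
        rw [Real.rpow_one] at h2
        have h3 : 1 - t ≤ Real.exp (-t) := by
          have := Real.add_one_le_exp (-t); linarith
        linarith
      · have h2 : (1:ℝ) ≤ t ^ θ := Real.one_le_rpow h.le hθ0
        linarith
  have h0 : (0:ℝ) ∈ Set.Ici (0:ℝ) := Set.mem_Ici.mpr le_rfl
  have := key h0 hx hx
  simp only [Real.zero_rpow (ne_of_gt hp0), Real.exp_zero, neg_zero, zero_div] at this
  linarith

/-- For `y ≤ 0` and `θ ∈ [0,1]`:
`|y|(1 − e^{y/2})/2 ≤ e^y − (1 + y) ≤ |y|^{1+θ}/(1+θ)`, and in particular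
`e^y − (1+y) ≤ |y|^{1+θ}`. -/
theorem exp_one_add_bounds (y : ℝ) (hy : y ≤ 0) (θ : ℝ) (hθ0 : 0 ≤ θ) (hθ1 : θ ≤ 1) :
    |y| * (1 - Real.exp (y / 2)) / 2 ≤ Real.exp y - (1 + y)
    ∧ Real.exp y - (1 + y) ≤ |y| ^ (1 + θ) / (1 + θ)
    ∧ Real.exp y - (1 + y) ≤ |y| ^ (1 + θ) := by
  have habs : |y| = -y := abs_of_nonpos hy
  have hx : 0 ≤ -y := by linarith
  refine ⟨?_, ?_, ?_⟩
  · -- lower bound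
    set u : ℝ := Real.exp (y / 2) with hu
    have hu0 : 0 < u := Real.exp_pos _
    have hu1 : y / 2 + 1 ≤ u := Real.add_one_le_exp (y / 2)
    have hsq : Real.exp y = u * u := by
      rw [hu, ← Real.exp_add]; ring_nf
    rw [habs, hsq]
    nlinarith [mul_nonneg (sub_nonneg.mpr hu1) (by linarith : (0:ℝ) ≤ 1 + u)]
  · have h1 : Real.exp y = Real.exp (-(-y)) := by ring_nf
    have := aux_upper θ hθ0 hθ1 hx
    rw [habs]; rw [h1] at *; linarith
  · have h1 : Real.exp y = Real.exp (-(-y)) := by ring_nf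
    have h2 := aux_upper θ hθ0 hθ1 hx
    have h3 : (-y) ^ (1 + θ) / (1 + θ) ≤ (-y) ^ (1 + θ) := by
      apply div_le_self (Real.rpow_nonneg hx _) (by linarith)
    rw [habs, h1]; linarith
end
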